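/- For every compression function q for length n, if |q(x)| < n for the lexicographically first element x of A_{BB(m)}^n, then the maximum over all strings y of length n of the halting time of U on input q(y) is strictly greater than BB(m). -/

import Mathlib

/-- `A s ℓ`: strings of length `ℓ` not output within `s` steps by any program
of length less than `ℓ`. -/
def Aset (Ustep : ℕ → List Bool → Option (List Bool)) (s ℓ : ℕ) :
    Set (List Bool) :=
  {y | y.length = ℓ ∧ ¬ ∃ p : List Bool, p.length < ℓ ∧ Ustep s p = some y}

/-- The halting time of program `p`: the least `s` with `Ustep s p` defined. -/
noncomputable def haltTime (Ustep : ℕ → List Bool → Option (List Bool))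
    (p : List Bool) : ℕ :=
  sInf {s | (Ustep s p).isSome = true}

/-- Busy beaver: the maximum halting time over halting programs of length ≤ `m`. -/
noncomputable def BB (Ustep : ℕ → List Bool → Option (List Bool)) (m : ℕ) : ℕ :=
  sSup {t | ∃ p : List Bool, p.length ≤ m ∧ (∃ s, (Ustep s p).isSome = true) ∧
    t = haltTime Ustep p}

/-!
Let `t` be the halting time of `q x`. Since step-indexed outputs never change once defined, `q x`
already outputs `x` at step `t`, and would do so at step `BB(m)` if `t ≤ BB(m)`; as `|q x| < n`,
this contradicts `x ∈ A_{BB(m)}^n`. Hence `BB(m) < t`, and `t` is one of the finitely many halting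
times over which the supremum is taken.
-/

def StepStable (Ustep : ℕ → List Bool → Option (List Bool)) : Prop :=
  ∀ s s' p, s ≤ s' → (Ustep s p).isSome = true → Ustep s' p = Ustep s p

section

variable {Ustep : ℕ → List Bool → Option (List Bool)} {s t : ℕ} {p x : List Bool}

theorem haltTime_le (hs : (Ustep s p).isSome = true) : haltTime Ustep p ≤ s :=
  Nat.sInf_le hs

theorem isSome_haltTime (hs : (Ustep s p).isSome = true) :
    (Ustep (haltTime Ustep p) p).isSome = true :=
  Nat.sInf_mem (s := {s | (Ustep s p).isSome = true}) ⟨s, hs⟩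

namespace StepStable

theorem eq_of_le (h : StepStable Ustep) (hs : Ustep s p = some x) (hle : s ≤ t) :
    Ustep t p = some x :=
  (h s t p hle (by simp [hs])).trans hs

theorem haltTime_eq (h : StepStable Ustep) (hs : Ustep s p = some x) :
    Ustep (haltTime Ustep p) p = some x := by
  have hhalts : (Ustep s p).isSome = true := by simp [hs]
  exact (h _ s p (haltTime_le hhalts) (isSome_haltTime hhalts)).symm.trans hs

theorem lt_haltTime_of_mem_Aset (h : StepStable Ustep) {n : ℕ} (hx : x ∈ Aset Ustep s n)
    (hp : p.length < n) (hpx : Ustep t p = some x) : s < haltTime Ustep p := by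
  by_contra! hle
  exact hx.2 ⟨p, hp, h.eq_of_le (h.haltTime_eq hpx) hle⟩

end StepStable

end

theorem bddAbove_setOf_length_eq {α : Type*} [Finite α] (f : List α → ℕ) (n : ℕ) :
    BddAbove {t | ∃ y : List α, y.length = n ∧ t = f y} := by
  have himage : {t | ∃ y : List α, y.length = n ∧ t = f y} = f '' {y | y.length = n} := by
    ext t
    simp [eq_comm]
  rw [himage]
  exact ((List.finite_length_eq α n).image f).bddAbove

theorem small_compression_forces_long_time_general
    (U : List Bool → Option (List Bool))
    (Ustep : ℕ → List Bool → Option (List Bool))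
    (hmono : ∀ s s' p : _, s ≤ s' → (Ustep s p).isSome = true → Ustep s' p = Ustep s p)
    (hlim : ∀ p y : List Bool, U p = some y ↔ ∃ s, Ustep s p = some y)
    (m n : ℕ)
    (x : List Bool)
    (hxA : x ∈ Aset Ustep (BB Ustep m) n)
    (q : List Bool → List Bool)
    (hq : ∀ y : List Bool, y.length = n → U (q y) = some y)
    (hqx : (q x).length < n) :
    BB Ustep m < sSup {t | ∃ y : List Bool, y.length = n ∧ t = haltTime Ustep (q y)} := by
  obtain ⟨s, hs⟩ := (hlim (q x) x).mp (hq x hxA.1)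
  have hlong : BB Ustep m < haltTime Ustep (q x) :=
    StepStable.lt_haltTime_of_mem_Aset hmono hxA hqx hs
  exact hlong.trans_le <|
    le_csSup (bddAbove_setOf_length_eq (haltTime Ustep ∘ q) n) ⟨x, hxA.1, rfl⟩

/-- Let `x` be the lexicographically first element of `A_{BB(m)}^n`.  For every
compression function `q` for length `n`, if `|q(x)| < n` then the maximum over
strings `y` of length `n` of the halting time of `U` on `q(y)` exceeds `BB(m)`. -/
theorem small_compression_forces_long_time
    (U : List Bool → Option (List Bool))
    (Ustep : ℕ → List Bool → Option (List Bool))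
    (hmono : ∀ s s' p : _, s ≤ s' → (Ustep s p).isSome = true → Ustep s' p = Ustep s p)
    (hlim : ∀ p y : List Bool, U p = some y ↔ ∃ s, Ustep s p = some y)
    (m n : ℕ)
    (x : List Bool)
    (hxA : x ∈ Aset Ustep (BB Ustep m) n)
    (hxfirst : ∀ y ∈ Aset Ustep (BB Ustep m) n, ¬ List.Lex (· < ·) y x)
    (q : List Bool → List Bool)
    (hq : ∀ y : List Bool, y.length = n → U (q y) = some y)
    (hqx : (q x).length < n) :
    BB Ustep m < sSup {t | ∃ y : List Bool, y.length = n ∧ t = haltTime Ustep (q y)} :=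
  small_compression_forces_long_time_general U Ustep hmono hlim m n x hxA q hq hqx
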